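/- arXiv:1402.0663 — 6 statements merged into one kernel-verified Lean document; each statement's English description precedes it below -/
import Mathlib

section
/- Along any motion of a mechanical system with gyroscopic forces on ℝⁿ, the momentum function associated with an infinitesimal symmetry satisfies d/dt ⟨A ẋ(t), v(x(t))⟩ = −⟨K(x(t)) v(x(t)), ẋ(t)⟩, i.e. the rate of change of the momentum ⟨Aẋ, v(x)⟩ equals the value of the interior product of the gyroscopic form with v evaluated on the velocity. -/
open Matrix Set

/-- The Jacobian matrix of a vector field `v : ℝⁿ → ℝⁿ` at a point `x`. -/
noncomputable def jacobian (n : ℕ) (v : (Fin n → ℝ) → (Fin n → ℝ)) (x : Fin n → ℝ) :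
    Matrix (Fin n) (Fin n) ℝ :=
  Matrix.of fun i j => fderiv ℝ v x (Pi.single j 1) i

lemma fderiv_eq_jac (n : ℕ) (v : (Fin n → ℝ) → (Fin n → ℝ)) (x y : Fin n → ℝ) :
    fderiv ℝ v x y = jacobian n v x *ᵥ y := by
  have hy : y = ∑ j, y j • (Pi.single j (1:ℝ) : Fin n → ℝ) := by
    funext i
    simp [Finset.sum_apply, Pi.single_apply]
  conv_lhs => rw [hy]
  rw [map_sum]
  funext i
  simp only [Finset.sum_apply, ContinuousLinearMap.map_smul, Pi.smul_apply, smul_eq_mul,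
    mulVec, dotProduct, jacobian, Matrix.of_apply]
  exact Finset.sum_congr rfl fun j _ => mul_comm _ _

/-- Along any motion of a mechanical system with gyroscopic forces on ℝⁿ, the momentum
function associated with an infinitesimal symmetry satisfies
`d/dt ⟨A ẋ(t), v(x(t))⟩ = −⟨K(x(t)) v(x(t)), ẋ(t)⟩`. -/
theorem momentum_derivative_eq_neg_gyroscopic
    (n : ℕ)
    -- the kinetic-energy metric: a positive-definite symmetric matrix
    (A : Matrix (Fin n) (Fin n) ℝ) (hA : A.PosDef) (hAsymm : A.IsSymm)
    -- the potential and its gradient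
    (Pot : (Fin n → ℝ) → ℝ) (hPot : ContDiff ℝ (⊤ : ℕ∞) Pot)
    (gradPot : (Fin n → ℝ) → (Fin n → ℝ))
    (hgradPot : ∀ x y, fderiv ℝ Pot x y = gradPot x ⬝ᵥ y)
    -- the coefficient matrix of the 2-form of gyroscopic forces: smooth, pointwise skew
    (K : (Fin n → ℝ) → Matrix (Fin n) (Fin n) ℝ) (hK : ∀ i j, ContDiff ℝ (⊤ : ℕ∞) (fun x => K x i j))
    (hKskew : ∀ x, (K x)ᵀ = -(K x))
    -- an infinitesimal symmetry: smooth vector field preserving the metric and the potential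
    (v : (Fin n → ℝ) → (Fin n → ℝ)) (hv : ContDiff ℝ (⊤ : ℕ∞) v)
    (hvmetric : ∀ x, (jacobian n v x)ᵀ * A + A * jacobian n v x = 0)
    (hvpot : ∀ x, gradPot x ⬝ᵥ v x = 0)
    -- a motion of the system: a C² curve satisfying A ẍ = −∇Π(x) + K(x) ẋ
    (x : ℝ → (Fin n → ℝ)) (hx : ContDiff ℝ 2 x)
    (hmotion : ∀ t, A *ᵥ deriv (deriv x) t = -gradPot (x t) + K (x t) *ᵥ deriv x t) :
    ∀ t, HasDerivAt (fun s => (A *ᵥ deriv x s) ⬝ᵥ v (x s))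
      (-((K (x t) *ᵥ v (x t)) ⬝ᵥ deriv x t)) t := by
  intro t
  have hxd : Differentiable ℝ x := hx.differentiable (by norm_num)
  have hcC : ContDiff ℝ 1 (deriv x) := by
    have h2 : ContDiff ℝ ((1:ℕ) + 1) x := by exact_mod_cast hx
    exact (contDiff_succ_iff_deriv.mp h2).2.2
  set c : ℝ → (Fin n → ℝ) := deriv x with hcdef
  set a : Fin n → ℝ := deriv c t with hadef
  have hca : HasDerivAt c a t := ((hcC.differentiable one_ne_zero) t).hasDerivAt
  have hxt : HasDerivAt x (c t) t := (hxd t).hasDerivAt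
  have hvx : HasFDerivAt v (fderiv ℝ v (x t)) (x t) :=
    ((hv.differentiable (by simp)) (x t)).hasFDerivAt
  set J : Matrix (Fin n) (Fin n) ℝ := jacobian n v (x t) with hJdef
  have hcomp : HasDerivAt (fun s => v (x s)) (J *ᵥ c t) t := by
    have := hvx.comp_hasDerivAt t hxt
    rwa [fderiv_eq_jac] at this
  have hA' : HasDerivAt (fun s => A *ᵥ c s) (A *ᵥ a) t := by
    rw [hasDerivAt_pi]
    intro i
    have : ∀ s, (A *ᵥ c s) i = ∑ j, A i j * c s j := fun s => rfl
    simp only [this]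
    have : (A *ᵥ a) i = ∑ j, A i j * a j := rfl
    rw [this]
    exact HasDerivAt.fun_sum fun j _ => (hasDerivAt_pi.mp hca j).const_mul (A i j)
  have hprod : HasDerivAt (fun s => (A *ᵥ c s) ⬝ᵥ v (x s))
      ((A *ᵥ a) ⬝ᵥ v (x t) + (A *ᵥ c t) ⬝ᵥ (J *ᵥ c t)) t := by
    have h1 : ∀ i, HasDerivAt (fun s => (A *ᵥ c s) i * v (x s) i)
        ((A *ᵥ a) i * v (x t) i + (A *ᵥ c t) i * (J *ᵥ c t) i) t := fun i =>
      (hasDerivAt_pi.mp hA' i).mul (hasDerivAt_pi.mp hcomp i)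
    have h2 := HasDerivAt.fun_sum (fun i (_ : i ∈ Finset.univ) => h1 i)
    simpa [dotProduct, Finset.sum_add_distrib] using h2
  have key : (A *ᵥ a) ⬝ᵥ v (x t) + (A *ᵥ c t) ⬝ᵥ (J *ᵥ c t)
      = -((K (x t) *ᵥ v (x t)) ⬝ᵥ c t) := by
    have hmot : A *ᵥ a = -gradPot (x t) + K (x t) *ᵥ c t := hmotion t
    have term1 : (A *ᵥ a) ⬝ᵥ v (x t) = -((K (x t) *ᵥ v (x t)) ⬝ᵥ c t) := by
      rw [hmot, add_dotProduct, neg_dotProduct, hvpot, neg_zero, zero_add,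
        dotProduct_comm, dotProduct_mulVec, ← mulVec_transpose, hKskew,
        neg_mulVec, neg_dotProduct]
    have term2 : (A *ᵥ c t) ⬝ᵥ (J *ᵥ c t) = 0 := by
      have hM : (A * J)ᵀ = -(A * J) := by
        rw [transpose_mul, hAsymm.eq, eq_neg_iff_add_eq_zero]
        exact hvmetric (x t)
      have hq : (A *ᵥ c t) ⬝ᵥ (J *ᵥ c t) = c t ⬝ᵥ ((A * J) *ᵥ c t) := by
        rw [dotProduct_comm, dotProduct_mulVec, ← mulVec_transpose, hAsymm.eq,
          mulVec_mulVec, dotProduct_comm]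
      have hq2 : c t ⬝ᵥ ((A * J) *ᵥ c t) = -(c t ⬝ᵥ ((A * J) *ᵥ c t)) := by
        conv_lhs => rw [show A * J = -((A*J)ᵀ) by rw [hM, neg_neg], neg_mulVec,
          dotProduct_neg]
        rw [mulVec_transpose]
        conv_lhs => rw [dotProduct_comm (c t)]
        rw [← dotProduct_mulVec]
      rw [hq]
      linarith [hq2]
    rw [term1, term2, add_zero]
  exact key ▸ hprod
end

section
/- (Theorem 1, sufficiency.) If there is a differentiable function f : ℝⁿ → ℝ such that ∇f(x) = K(x) v(x)·(−1)·(−1), i.e. ∇f(x) = K(x) v(x) for all x, then the function G(x, ẋ) = ⟨A ẋ, v(x)⟩ + f(x) is a first integral: G(x(t), ẋ(t)) is constant in t along every motion of the mechanical system with gyroscopic forces. -/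
open Matrix Set

lemma fderiv_eq_jacobian {n : ℕ} (v : (Fin n → ℝ) → (Fin n → ℝ)) (x y : Fin n → ℝ) :
    fderiv ℝ v x y = jacobian n v x *ᵥ y := by
  have hy : y = ∑ j, y j • (Pi.single j 1 : Fin n → ℝ) := by
    funext i
    simp [Finset.sum_apply, Pi.single_apply]
  conv_lhs => rw [hy]
  rw [map_sum]
  funext i
  simp only [Finset.sum_apply, _root_.map_smul, Pi.smul_apply, smul_eq_mul]
  simp [jacobian, Matrix.mulVec, dotProduct, mul_comm]

lemma hasDerivAt_dotProduct {n : ℕ} {p q : ℝ → Fin n → ℝ} {p' q' : Fin n → ℝ} {t : ℝ}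
    (hp : HasDerivAt p p' t) (hq : HasDerivAt q q' t) :
    HasDerivAt (fun s => p s ⬝ᵥ q s) (p' ⬝ᵥ q t + p t ⬝ᵥ q') t := by
  have h := HasDerivAt.fun_sum (u := Finset.univ)
    (fun i _ => ((hasDerivAt_pi.mp hp i).mul (hasDerivAt_pi.mp hq i)))
  simpa [dotProduct, Finset.sum_add_distrib] using h

/-- Theorem 1, sufficiency: if there is a differentiable `f : ℝⁿ → ℝ` with
`∇f(x) = K(x) v(x)` for all `x`, then `G(x, ẋ) = ⟨A ẋ, v(x)⟩ + f(x)` is a first integral: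
it is constant along every motion of the mechanical system with gyroscopic forces. -/
theorem first_integral_of_exact
    (n : ℕ)
    -- the kinetic-energy metric: a positive-definite symmetric matrix
    (A : Matrix (Fin n) (Fin n) ℝ) (hA : A.PosDef) (hAsymm : A.IsSymm)
    -- the potential and its gradient
    (Pot : (Fin n → ℝ) → ℝ) (hPot : ContDiff ℝ (⊤ : ℕ∞) Pot)
    (gradPot : (Fin n → ℝ) → (Fin n → ℝ))
    (hgradPot : ∀ x y, fderiv ℝ Pot x y = gradPot x ⬝ᵥ y)
    -- the coefficient matrix of the 2-form of gyroscopic forces: smooth, pointwise skew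
    (K : (Fin n → ℝ) → Matrix (Fin n) (Fin n) ℝ)
    (hK : ∀ i j, ContDiff ℝ (⊤ : ℕ∞) (fun x => K x i j))
    (hKskew : ∀ x, (K x)ᵀ = -(K x))
    -- an infinitesimal symmetry: smooth vector field preserving the metric and the potential
    (v : (Fin n → ℝ) → (Fin n → ℝ)) (hv : ContDiff ℝ (⊤ : ℕ∞) v)
    (hvmetric : ∀ x, (jacobian n v x)ᵀ * A + A * jacobian n v x = 0)
    (hvpot : ∀ x, gradPot x ⬝ᵥ v x = 0)
    -- a differentiable function f with ∇f = K v
    (f : (Fin n → ℝ) → ℝ) (hf : Differentiable ℝ f)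
    (hgradf : ∀ x y, fderiv ℝ f x y = (K x *ᵥ v x) ⬝ᵥ y)
    -- a motion of the system: a C² curve satisfying A ẍ = −∇Π(x) + K(x) ẋ
    (x : ℝ → (Fin n → ℝ)) (hx : ContDiff ℝ 2 x)
    (hmotion : ∀ t, A *ᵥ deriv (deriv x) t = -gradPot (x t) + K (x t) *ᵥ deriv x t) :
    ∀ t₁ t₂ : ℝ,
      (A *ᵥ deriv x t₁) ⬝ᵥ v (x t₁) + f (x t₁) =
      (A *ᵥ deriv x t₂) ⬝ᵥ v (x t₂) + f (x t₂) := by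
  have h2 : ContDiff ℝ ((1 : ℕ) + 1) x := by exact_mod_cast hx
  obtain ⟨hx1, hxd⟩ := contDiff_succ_iff_deriv.mp h2
  have hxd1 : Differentiable ℝ (deriv x) := hxd.2.differentiable (by simp)
  set g : ℝ → ℝ := fun s => (A *ᵥ deriv x s) ⬝ᵥ v (x s) + f (x s) with hg_def
  have hg : ∀ t, HasDerivAt g 0 t := by
    intro t
    set y := deriv x t
    set z := deriv (deriv x) t
    set J := jacobian n v (x t)
    set w := v (x t)
    have hx' : HasDerivAt x y t := (hx1 t).hasDerivAt
    have hx'' : HasDerivAt (deriv x) z t := (hxd1 t).hasDerivAt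
    have hAd : HasDerivAt (fun s => A *ᵥ deriv x s) (A *ᵥ z) t := by
      apply hasDerivAt_pi.mpr
      intro i
      have := HasDerivAt.fun_sum (u := Finset.univ)
        (fun j (_ : j ∈ Finset.univ) => (hasDerivAt_pi.mp hx'' j).const_mul (A i j))
      simpa [Matrix.mulVec, dotProduct] using this
    have hvx : HasDerivAt (fun s => v (x s)) (J *ᵥ y) t := by
      have h := ((hv.differentiable (by simp)) (x t)).hasFDerivAt.comp_hasDerivAt t hx'
      rw [fderiv_eq_jacobian] at h
      exact h
    have hfx : HasDerivAt (fun s => f (x s)) ((K (x t) *ᵥ w) ⬝ᵥ y) t := by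
      have h := (hf (x t)).hasFDerivAt.comp_hasDerivAt t hx'
      rw [hgradf] at h
      exact h
    have hdot := (hasDerivAt_dotProduct hAd hvx).add hfx
    have hmid : (A *ᵥ y) ⬝ᵥ (J *ᵥ y) = 0 := by
      have h0 : y ⬝ᵥ ((Jᵀ * A + A * J) *ᵥ y) = 0 := by
        rw [hvmetric]
        simp
      rw [Matrix.add_mulVec, dotProduct_add, ← Matrix.mulVec_mulVec,
        ← Matrix.mulVec_mulVec, Matrix.dotProduct_mulVec y Jᵀ,
        Matrix.vecMul_transpose, Matrix.dotProduct_mulVec y A,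
        ← Matrix.transpose_transpose A, Matrix.vecMul_transpose, hAsymm.eq,
        dotProduct_comm (J *ᵥ y)] at h0
      rw [hAsymm.eq] at h0
      linarith
    have hfirst : (A *ᵥ z) ⬝ᵥ w = - ((K (x t) *ᵥ w) ⬝ᵥ y) := by
      rw [hmotion t, add_dotProduct, neg_dotProduct, hvpot, neg_zero,
        zero_add, dotProduct_comm, Matrix.dotProduct_mulVec,
        ← Matrix.mulVec_transpose, hKskew, Matrix.neg_mulVec, neg_dotProduct]
    have hzero : (A *ᵥ z) ⬝ᵥ w + (A *ᵥ y) ⬝ᵥ (J *ᵥ y) + (K (x t) *ᵥ w) ⬝ᵥ y = 0 := by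
      rw [hmid, hfirst]; ring
    rw [hzero] at hdot
    exact hdot
  intro t₁ t₂
  exact is_const_of_deriv_eq_zero (fun t => (hg t).differentiableAt)
    (fun t => (hg t).deriv) t₁ t₂
end

section
/- (Theorem 1, necessity.) Let f : ℝⁿ → ℝ be differentiable and suppose that for every initial condition (x₀, w₀) ∈ ℝⁿ × ℝⁿ there exist ε > 0 and a motion x : (−ε, ε) → ℝⁿ of the system with x(0) = x₀ and ẋ(0) = w₀ along which the function G(x(t), ẋ(t)) = ⟨A ẋ(t), v(x(t))⟩ + f(x(t)) is constant. Then ∇f(x) = K(x) v(x) for every x ∈ ℝⁿ. -/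
open Matrix Set

private lemma hasDerivAt_dot {n : ℕ} {F G : ℝ → Fin n → ℝ} {F' G' : Fin n → ℝ} {t : ℝ}
    (hF : HasDerivAt F F' t) (hG : HasDerivAt G G' t) :
    HasDerivAt (fun s => F s ⬝ᵥ G s) (F' ⬝ᵥ G t + F t ⬝ᵥ G') t := by
  have : HasDerivAt (fun s => ∑ i, F s i * G s i)
      (∑ i, (F' i * G t i + F t i * G' i)) t :=
    HasDerivAt.fun_sum fun i _ => ((hasDerivAt_pi.1 hF i).mul (hasDerivAt_pi.1 hG i))
  simpa [dotProduct, Finset.sum_add_distrib] using this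

private lemma jacobian_mulVec {n : ℕ} (v : (Fin n → ℝ) → (Fin n → ℝ)) (x w : Fin n → ℝ) :
    jacobian n v x *ᵥ w = fderiv ℝ v x w := by
  have hw : w = ∑ j, w j • (Pi.single j 1 : Fin n → ℝ) := by
    funext i
    simp [Pi.single_apply, Finset.sum_ite_eq']
  funext i
  conv_rhs => rw [hw]
  simp [jacobian, Matrix.mulVec, dotProduct, map_sum, _root_.map_smul, mul_comm,
    Finset.sum_apply]

/-- quadratic form of a skew matrix vanishes -/
private lemma skew_quad {n : ℕ} {M : Matrix (Fin n) (Fin n) ℝ} (hM : Mᵀ = -M)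
    (w : Fin n → ℝ) : w ⬝ᵥ (M *ᵥ w) = 0 := by
  have h1 : w ⬝ᵥ (M *ᵥ w) = (Mᵀ *ᵥ w) ⬝ᵥ w := by
    rw [Matrix.dotProduct_mulVec, Matrix.mulVec_transpose]
  rw [hM, Matrix.neg_mulVec, neg_dotProduct, dotProduct_comm] at h1
  rw [dotProduct_comm]
  linarith


/-- Theorem 1, necessity: let `f : ℝⁿ → ℝ` be differentiable and suppose that through every
initial condition `(x₀, w₀)` there is a local motion of the system along which
`G(x, ẋ) = ⟨A ẋ, v(x)⟩ + f(x)` is constant. Then `∇f(x) = K(x) v(x)` for every `x`. -/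
theorem exact_of_first_integral
    (n : ℕ)
    -- the kinetic-energy metric: a positive-definite symmetric matrix
    (A : Matrix (Fin n) (Fin n) ℝ) (hA : A.PosDef) (hAsymm : A.IsSymm)
    -- the potential and its gradient
    (Pot : (Fin n → ℝ) → ℝ) (hPot : ContDiff ℝ (⊤ : ℕ∞) Pot)
    (gradPot : (Fin n → ℝ) → (Fin n → ℝ))
    (hgradPot : ∀ x y, fderiv ℝ Pot x y = gradPot x ⬝ᵥ y)
    -- the coefficient matrix of the 2-form of gyroscopic forces: smooth, pointwise skew
    (K : (Fin n → ℝ) → Matrix (Fin n) (Fin n) ℝ)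
    (hK : ∀ i j, ContDiff ℝ (⊤ : ℕ∞) (fun x => K x i j))
    (hKskew : ∀ x, (K x)ᵀ = -(K x))
    -- an infinitesimal symmetry: smooth vector field preserving the metric and the potential
    (v : (Fin n → ℝ) → (Fin n → ℝ)) (hv : ContDiff ℝ (⊤ : ℕ∞) v)
    (hvmetric : ∀ x, (jacobian n v x)ᵀ * A + A * jacobian n v x = 0)
    (hvpot : ∀ x, gradPot x ⬝ᵥ v x = 0)
    -- a differentiable function f, and its gradient
    (f : (Fin n → ℝ) → ℝ) (hf : Differentiable ℝ f)
    (gradf : (Fin n → ℝ) → (Fin n → ℝ))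
    (hgradf : ∀ x y, fderiv ℝ f x y = gradf x ⬝ᵥ y)
    -- through every initial condition there is a local motion along which G is constant
    (hint : ∀ x₀ w₀ : Fin n → ℝ, ∃ ε > (0 : ℝ), ∃ x : ℝ → (Fin n → ℝ),
      ContDiffOn ℝ 2 x (Ioo (-ε) ε) ∧ x 0 = x₀ ∧ deriv x 0 = w₀ ∧
      (∀ t ∈ Ioo (-ε) ε,
        A *ᵥ deriv (deriv x) t = -gradPot (x t) + K (x t) *ᵥ deriv x t) ∧
      (∀ t ∈ Ioo (-ε) ε,
        (A *ᵥ deriv x t) ⬝ᵥ v (x t) + f (x t) =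
        (A *ᵥ deriv x 0) ⬝ᵥ v (x 0) + f (x 0))) :
    ∀ x : Fin n → ℝ, gradf x = K x *ᵥ v x := by
  -- The key pointwise identity, valid for all initial velocities w₀:
  have key : ∀ x₀ w₀ : Fin n → ℝ, gradf x₀ ⬝ᵥ w₀ = (K x₀ *ᵥ v x₀) ⬝ᵥ w₀ := by
    intro x₀ w₀
    obtain ⟨ε, hε, x, hx, hx0, hx0', hmot, hG⟩ := hint x₀ w₀
    have h0 : (0:ℝ) ∈ Ioo (-ε) ε := by constructor <;> linarith
    have hIopen : IsOpen (Ioo (-ε) ε) := isOpen_Ioo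
    -- differentiability facts
    have hx2 : ContDiffOn ℝ ((1:ℕ) + 1) x (Ioo (-ε) ε) := by
      exact_mod_cast hx
    rw [contDiffOn_succ_iff_deriv_of_isOpen hIopen] at hx2
    have hxdiff : DifferentiableAt ℝ x 0 := hx2.1.differentiableAt (hIopen.mem_nhds h0)
    have hudiff : DifferentiableAt ℝ (deriv x) 0 :=
      (hx2.2.2.differentiableOn (by norm_num)).differentiableAt (hIopen.mem_nhds h0)
    have hx0d : HasDerivAt x w₀ 0 := by
      have := hxdiff.hasDerivAt
      rwa [hx0'] at this
    set a := deriv (deriv x) 0 with ha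
    have hud : HasDerivAt (deriv x) a 0 := hudiff.hasDerivAt
    -- derivative of A *ᵥ deriv x
    have hAu : HasDerivAt (fun s => A *ᵥ deriv x s) (A *ᵥ a) 0 :=
      A.mulVecLin.toContinuousLinearMap.hasFDerivAt.comp_hasDerivAt 0 hud
    -- derivative of v ∘ x and f ∘ x
    have hvx : HasDerivAt (fun s => v (x s)) (fderiv ℝ v x₀ w₀) 0 := by
      have := ((hv.differentiable (by simp)) (x 0)).hasFDerivAt.comp_hasDerivAt 0 hx0d
      rw [hx0] at this
      exact this
    have hfx : HasDerivAt (fun s => f (x s)) (gradf x₀ ⬝ᵥ w₀) 0 := by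
      have := (hf (x 0)).hasFDerivAt.comp_hasDerivAt 0 hx0d
      rw [hx0, hgradf] at this
      exact this
    -- derivative of G
    have hGd : HasDerivAt (fun s => (A *ᵥ deriv x s) ⬝ᵥ v (x s) + f (x s))
        ((A *ᵥ a) ⬝ᵥ v x₀ + (A *ᵥ w₀) ⬝ᵥ fderiv ℝ v x₀ w₀ + gradf x₀ ⬝ᵥ w₀) 0 := by
      have := (hasDerivAt_dot hAu hvx).add hfx
      rw [hx0, hx0'] at this
      exact this
    -- G is locally constant, hence its derivative at 0 vanishes
    have hconst : HasDerivAt (fun s => (A *ᵥ deriv x s) ⬝ᵥ v (x s) + f (x s)) 0 0 := by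
      have heq : (fun s => (A *ᵥ deriv x s) ⬝ᵥ v (x s) + f (x s)) =ᶠ[nhds 0]
          (fun _ => (A *ᵥ deriv x 0) ⬝ᵥ v (x 0) + f (x 0)) :=
        Filter.eventually_of_mem (hIopen.mem_nhds h0) hG
      exact (hasDerivAt_const (0:ℝ) _).congr_of_eventuallyEq heq
    have hzero : (A *ᵥ a) ⬝ᵥ v x₀ + (A *ᵥ w₀) ⬝ᵥ fderiv ℝ v x₀ w₀ + gradf x₀ ⬝ᵥ w₀ = 0 :=
      hGd.unique hconst
    -- substitute the equations of motion
    have hmot0 : A *ᵥ a = -gradPot x₀ + K x₀ *ᵥ w₀ := by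
      have := hmot 0 h0
      rwa [hx0, hx0'] at this
    -- the gyroscopic term
    have hterm1 : (A *ᵥ a) ⬝ᵥ v x₀ = -((K x₀ *ᵥ v x₀) ⬝ᵥ w₀) := by
      rw [hmot0, add_dotProduct, neg_dotProduct, hvpot x₀]
      have : (K x₀ *ᵥ w₀) ⬝ᵥ v x₀ = -((K x₀ *ᵥ v x₀) ⬝ᵥ w₀) := by
        rw [dotProduct_comm, Matrix.dotProduct_mulVec, ← Matrix.mulVec_transpose,
          hKskew, Matrix.neg_mulVec, neg_dotProduct]
      rw [this]; ring
    -- the metric term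
    have hterm2 : (A *ᵥ w₀) ⬝ᵥ fderiv ℝ v x₀ w₀ = 0 := by
      rw [← jacobian_mulVec v x₀ w₀]
      have hskew : (A * jacobian n v x₀)ᵀ = -(A * jacobian n v x₀) := by
        rw [Matrix.transpose_mul, hAsymm.eq]
        exact eq_neg_of_add_eq_zero_left (hvmetric x₀)
      have := skew_quad hskew w₀
      rw [← Matrix.mulVec_mulVec] at this
      calc (A *ᵥ w₀) ⬝ᵥ (jacobian n v x₀ *ᵥ w₀)
          = ((jacobian n v x₀ *ᵥ w₀) ᵥ* A) ⬝ᵥ w₀ := by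
            rw [dotProduct_comm, Matrix.dotProduct_mulVec]
        _ = (A *ᵥ (jacobian n v x₀ *ᵥ w₀)) ⬝ᵥ w₀ := by
            rw [← Matrix.mulVec_transpose, hAsymm.eq]
        _ = w₀ ⬝ᵥ (A *ᵥ (jacobian n v x₀ *ᵥ w₀)) := dotProduct_comm _ _
        _ = 0 := this
    rw [hterm1, hterm2] at hzero
    linarith [hzero]
  intro x₀
  funext i
  have := key x₀ (Pi.single i 1)
  simpa [dotProduct, Pi.single_apply, Finset.sum_ite_eq'] using this
end

section
/- (Derivative formula for the area-type function; Lemma 1 specialized to the rigid body.) Let f : ℝ³ → ℝ be differentiable. Along every solution (ω, α) of the Euler–Poisson system with gyroscopic forces, the function G(t) = A₁ω₁(t)α₁(t) + A₂ω₂(t)α₂(t) + A₃ω₃(t)α₃(t) + f(α(t)) satisfies dG/dt = ⟨ω(t), (∇f(α(t)) − κ(α(t))) × α(t)⟩. -/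
open Matrix Set

/-- Derivative formula for the area-type function (Lemma 1 specialized to the rigid body):
along every solution `(ω, α)` of the Euler–Poisson system with gyroscopic forces, the
function `G(t) = A₁ω₁α₁ + A₂ω₂α₂ + A₃ω₃α₃ + f(α)` satisfies
`dG/dt = ⟨ω, (∇f(α) − κ(α)) × α⟩`. -/
theorem areaFunction_deriv
    -- principal moments of inertia
    (a : Fin 3 → ℝ) (ha : ∀ i, 0 < a i)
    -- the coefficient vector of the form of gyroscopic forces
    (κ : (Fin 3 → ℝ) → (Fin 3 → ℝ)) (hκ : ContDiff ℝ (⊤ : ℕ∞) κ)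
    -- the potential and its gradient
    (Pot : (Fin 3 → ℝ) → ℝ) (hPot : ContDiff ℝ (⊤ : ℕ∞) Pot)
    (gradPot : (Fin 3 → ℝ) → (Fin 3 → ℝ))
    (hgradPot : ∀ x y, fderiv ℝ Pot x y = gradPot x ⬝ᵥ y)
    -- a differentiable function f and its gradient
    (f : (Fin 3 → ℝ) → ℝ) (hf : Differentiable ℝ f)
    (gradf : (Fin 3 → ℝ) → (Fin 3 → ℝ))
    (hgradf : ∀ x y, fderiv ℝ f x y = gradf x ⬝ᵥ y)
    -- a solution of the Euler–Poisson system with gyroscopic forces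
    (ω α : ℝ → (Fin 3 → ℝ)) (hω : ContDiff ℝ 1 ω) (hα : ContDiff ℝ 1 α)
    (heuler : ∀ t, Matrix.diagonal a *ᵥ deriv ω t =
      (Matrix.diagonal a *ᵥ ω t) ⨯₃ ω t + κ (α t) ⨯₃ ω t + α t ⨯₃ gradPot (α t))
    (hpoisson : ∀ t, deriv α t = α t ⨯₃ ω t) :
    ∀ t, HasDerivAt
      (fun s => a 0 * ω s 0 * α s 0 + a 1 * ω s 1 * α s 1 + a 2 * ω s 2 * α s 2 + f (α s))
      (ω t ⬝ᵥ ((gradf (α t) - κ (α t)) ⨯₃ α t)) t := by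

  intro t
  have hαd := (hα.differentiable one_ne_zero t).hasDerivAt
  have hωd := (hω.differentiable one_ne_zero t).hasDerivAt
  have hωi : ∀ i, HasDerivAt (fun s => ω s i) (deriv ω t i) t := fun i =>
    hasDerivAt_pi.mp hωd i
  have hαi : ∀ i, HasDerivAt (fun s => α s i) (deriv α t i) t := fun i =>
    hasDerivAt_pi.mp hαd i
  have hfd : HasDerivAt (fun s => f (α s)) (gradf (α t) ⬝ᵥ deriv α t) t := by
    have h := (hf (α t)).hasFDerivAt.comp_hasDerivAt t hαd
    rwa [hgradf] at h
  have H := (((((hωi 0).const_mul (a 0)).mul (hαi 0)).add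
      (((hωi 1).const_mul (a 1)).mul (hαi 1))).add
      (((hωi 2).const_mul (a 2)).mul (hαi 2))).add hfd
  convert H using 1
  · rfl
  · rfl
  · rfl
  have he0 := congrFun (heuler t) 0
  have he1 := congrFun (heuler t) 1
  have he2 := congrFun (heuler t) 2
  have hp0 := congrFun (hpoisson t) 0
  have hp1 := congrFun (hpoisson t) 1
  have hp2 := congrFun (hpoisson t) 2
  simp only [Matrix.mulVec_diagonal, crossProduct, Pi.add_apply, Pi.sub_apply,
    LinearMap.mk₂_apply, Matrix.cons_val_zero, Matrix.cons_val_one, Matrix.head_cons,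
    Matrix.cons_val_two, Matrix.tail_cons, dotProduct, Fin.sum_univ_three] at *
  rw [hp0, hp1, hp2]
  linear_combination (-(α t 0)) * he0 - α t 1 * he1 - α t 2 * he2
end

section
/- (Theorem 2, sufficiency.) Suppose the coefficient vector of the form of gyroscopic forces has the representation κ(α) = F(α) α + ∇f(α) for all α ∈ ℝ³, where F : ℝ³ → ℝ and f : ℝ³ → ℝ are smooth. Then the area integral exists: the function G(t) = A₁ω₁(t)α₁(t) + A₂ω₂(t)α₂(t) + A₃ω₃(t)α₃(t) + f(α(t)) is constant along every solution (ω, α) of the Euler–Poisson system with gyroscopic forces. -/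
open Matrix Set

/-- Theorem 2, sufficiency: if the coefficient vector of the form of gyroscopic forces has
the representation `κ(α) = F(α) α + ∇f(α)`, then the area integral exists: the function
`G(t) = A₁ω₁α₁ + A₂ω₂α₂ + A₃ω₃α₃ + f(α)` is constant along every solution `(ω, α)` of the
Euler–Poisson system with gyroscopic forces. -/
theorem area_integral_of_representation
    -- principal moments of inertia
    (a : Fin 3 → ℝ) (ha : ∀ i, 0 < a i)
    -- the coefficient vector of the form of gyroscopic forces
    (κ : (Fin 3 → ℝ) → (Fin 3 → ℝ)) (hκ : ContDiff ℝ (⊤ : ℕ∞) κ)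
    -- the potential and its gradient
    (Pot : (Fin 3 → ℝ) → ℝ) (hPot : ContDiff ℝ (⊤ : ℕ∞) Pot)
    (gradPot : (Fin 3 → ℝ) → (Fin 3 → ℝ))
    (hgradPot : ∀ x y, fderiv ℝ Pot x y = gradPot x ⬝ᵥ y)
    -- smooth functions F and f, and the gradient of f
    (F : (Fin 3 → ℝ) → ℝ) (hF : ContDiff ℝ (⊤ : ℕ∞) F)
    (f : (Fin 3 → ℝ) → ℝ) (hf : ContDiff ℝ (⊤ : ℕ∞) f)
    (gradf : (Fin 3 → ℝ) → (Fin 3 → ℝ))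
    (hgradf : ∀ x y, fderiv ℝ f x y = gradf x ⬝ᵥ y)
    -- the representation κ = F α + ∇f
    (hrep : ∀ x : Fin 3 → ℝ, κ x = F x • x + gradf x)
    -- a solution of the Euler–Poisson system with gyroscopic forces
    (ω α : ℝ → (Fin 3 → ℝ)) (hω : ContDiff ℝ 1 ω) (hα : ContDiff ℝ 1 α)
    (heuler : ∀ t, Matrix.diagonal a *ᵥ deriv ω t =
      (Matrix.diagonal a *ᵥ ω t) ⨯₃ ω t + κ (α t) ⨯₃ ω t + α t ⨯₃ gradPot (α t))
    (hpoisson : ∀ t, deriv α t = α t ⨯₃ ω t) :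
    ∀ t₁ t₂ : ℝ,
      a 0 * ω t₁ 0 * α t₁ 0 + a 1 * ω t₁ 1 * α t₁ 1 + a 2 * ω t₁ 2 * α t₁ 2 + f (α t₁) =
      a 0 * ω t₂ 0 * α t₂ 0 + a 1 * ω t₂ 1 * α t₂ 1 + a 2 * ω t₂ 2 * α t₂ 2 + f (α t₂) := by
  have hωd : Differentiable ℝ ω := hω.differentiable one_ne_zero
  have hαd : Differentiable ℝ α := hα.differentiable one_ne_zero
  set g : ℝ → ℝ := fun t =>
    a 0 * ω t 0 * α t 0 + a 1 * ω t 1 * α t 1 + a 2 * ω t 2 * α t 2 + f (α t) with hg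
  have key : ∀ t, HasDerivAt g 0 t := by
    intro t
    have hω' : HasDerivAt ω (deriv ω t) t := (hωd t).hasDerivAt
    have hα' : HasDerivAt α (deriv α t) t := (hαd t).hasDerivAt
    have hωi : ∀ i, HasDerivAt (fun s => ω s i) (deriv ω t i) t := fun i =>
      (ContinuousLinearMap.proj (R := ℝ) (φ := fun _ : Fin 3 => ℝ) i).hasFDerivAt.comp_hasDerivAt
        t hω'
    have hαi : ∀ i, HasDerivAt (fun s => α s i) (deriv α t i) t := fun i =>
      (ContinuousLinearMap.proj (R := ℝ) (φ := fun _ : Fin 3 => ℝ) i).hasFDerivAt.comp_hasDerivAt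
        t hα'
    have hfα : HasDerivAt (fun s => f (α s)) (gradf (α t) ⬝ᵥ deriv α t) t := by
      have h := ((hf.differentiable (by simp) (α t)).hasFDerivAt).comp_hasDerivAt t hα'
      rw [hgradf] at h
      exact h
    have hG : HasDerivAt g
        (a 0 * (deriv ω t 0 * α t 0 + ω t 0 * deriv α t 0) +
         a 1 * (deriv ω t 1 * α t 1 + ω t 1 * deriv α t 1) +
         a 2 * (deriv ω t 2 * α t 2 + ω t 2 * deriv α t 2) +
         gradf (α t) ⬝ᵥ deriv α t) t := by
      simpa only [hg, mul_assoc, Pi.add_def, Pi.mul_apply] using (((((hωi 0).mul (hαi 0)).const_mul (a 0)).add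
        (((hωi 1).mul (hαi 1)).const_mul (a 1))).add
        (((hωi 2).mul (hαi 2)).const_mul (a 2))).add hfα
    have hzero :
        (a 0 * (deriv ω t 0 * α t 0 + ω t 0 * deriv α t 0) +
         a 1 * (deriv ω t 1 * α t 1 + ω t 1 * deriv α t 1) +
         a 2 * (deriv ω t 2 * α t 2 + ω t 2 * deriv α t 2) +
         gradf (α t) ⬝ᵥ deriv α t) = 0 := by
      have he := heuler t
      rw [hrep] at he
      have e0 := congrFun he 0
      have e1 := congrFun he 1
      have e2 := congrFun he 2
      have hp := hpoisson t
      have p0 := congrFun hp 0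
      have p1 := congrFun hp 1
      have p2 := congrFun hp 2
      simp only [cross_apply, Matrix.mulVec_diagonal, Pi.add_apply, Pi.smul_apply,
        smul_eq_mul, Matrix.cons_val_zero, Matrix.cons_val_one, Matrix.head_cons,
        Matrix.cons_val_two, Matrix.tail_cons] at e0 e1 e2 p0 p1 p2
      simp only [dotProduct, Fin.sum_univ_three]
      linear_combination α t 0 * e0 + α t 1 * e1 + α t 2 * e2 +
        (a 0 * ω t 0 + gradf (α t) 0) * p0 +
        (a 1 * ω t 1 + gradf (α t) 1) * p1 +
        (a 2 * ω t 2 + gradf (α t) 2) * p2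
    exact hzero ▸ hG
  intro t₁ t₂
  have : g t₁ = g t₂ := by
    have hd : Differentiable ℝ g := fun t => (key t).differentiableAt
    exact is_const_of_deriv_eq_zero hd (fun t => (key t).deriv) t₁ t₂
  simpa [hg] using this
end

section
/- (Theorem 2, necessity.) Let f : ℝ³ → ℝ be differentiable and suppose that for every initial condition (ω₀, α₀) ∈ ℝ³ × ℝ³ with |α₀| = 1 there exist ε > 0 and a solution (ω, α) of the Euler–Poisson system with gyroscopic forces on (−ε, ε) with ω(0) = ω₀, α(0) = α₀, along which G(t) = A₁ω₁α₁ + A₂ω₂α₂ + A₃ω₃α₃ + f(α) is constant. Then for every α with |α| = 1 one has (κ(α) − ∇f(α)) × α = 0; equivalently, κ(α) = F(α) α + ∇f(α) on the unit sphere, where F(α) = (κ(α) − ∇f(α))·α. -/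
open Matrix Set

/-- Theorem 2, necessity: let `f : ℝ³ → ℝ` be differentiable and suppose that through every
initial condition `(ω₀, α₀)` with `|α₀| = 1` there is a local solution of the Euler–Poisson
system with gyroscopic forces along which `G = A₁ω₁α₁ + A₂ω₂α₂ + A₃ω₃α₃ + f(α)` is
constant. Then `(κ(α) − ∇f(α)) × α = 0` for every `α` with `|α| = 1`; equivalently,
`κ(α) = F(α) α + ∇f(α)` on the unit sphere, where `F(α) = (κ(α) − ∇f(α))·α`. -/
theorem representation_of_area_integral
    -- principal moments of inertia
    (a : Fin 3 → ℝ) (ha : ∀ i, 0 < a i)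
    -- the coefficient vector of the form of gyroscopic forces
    (κ : (Fin 3 → ℝ) → (Fin 3 → ℝ)) (hκ : ContDiff ℝ (⊤ : ℕ∞) κ)
    -- the potential and its gradient
    (Pot : (Fin 3 → ℝ) → ℝ) (hPot : ContDiff ℝ (⊤ : ℕ∞) Pot)
    (gradPot : (Fin 3 → ℝ) → (Fin 3 → ℝ))
    (hgradPot : ∀ x y, fderiv ℝ Pot x y = gradPot x ⬝ᵥ y)
    -- a differentiable function f and its gradient
    (f : (Fin 3 → ℝ) → ℝ) (hf : Differentiable ℝ f)
    (gradf : (Fin 3 → ℝ) → (Fin 3 → ℝ))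
    (hgradf : ∀ x y, fderiv ℝ f x y = gradf x ⬝ᵥ y)
    -- through every initial condition on the unit sphere there is a local solution
    -- along which G is constant
    (hint : ∀ ω₀ α₀ : Fin 3 → ℝ, α₀ ⬝ᵥ α₀ = 1 →
      ∃ ε > (0 : ℝ), ∃ ω α : ℝ → (Fin 3 → ℝ),
        ContDiffOn ℝ 1 ω (Ioo (-ε) ε) ∧ ContDiffOn ℝ 1 α (Ioo (-ε) ε) ∧
        ω 0 = ω₀ ∧ α 0 = α₀ ∧
        (∀ t ∈ Ioo (-ε) ε, Matrix.diagonal a *ᵥ deriv ω t =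
          (Matrix.diagonal a *ᵥ ω t) ⨯₃ ω t + κ (α t) ⨯₃ ω t + α t ⨯₃ gradPot (α t)) ∧
        (∀ t ∈ Ioo (-ε) ε, deriv α t = α t ⨯₃ ω t) ∧
        (∀ t ∈ Ioo (-ε) ε,
          a 0 * ω t 0 * α t 0 + a 1 * ω t 1 * α t 1 + a 2 * ω t 2 * α t 2 + f (α t) =
          a 0 * ω 0 0 * α 0 0 + a 1 * ω 0 1 * α 0 1 + a 2 * ω 0 2 * α 0 2 + f (α 0))) :
    ∀ α : Fin 3 → ℝ, α ⬝ᵥ α = 1 →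
      (κ α - gradf α) ⨯₃ α = 0 ∧
      κ α = ((κ α - gradf α) ⬝ᵥ α) • α + gradf α := by

  intro β hβ
  -- Step 1: for every ω₀, the derivative of G at 0 gives a scalar identity.
  have key : ∀ ω₀ : Fin 3 → ℝ, ω₀ ⬝ᵥ ((gradf β - κ β) ⨯₃ β) = 0 := by
    intro ω₀
    obtain ⟨ε, hε, ω, α, hωs, hαs, hω0, hα0, hode1, hode2, hG⟩ := hint ω₀ β hβ
    have h0 : (0:ℝ) ∈ Ioo (-ε) ε := ⟨by linarith, hε⟩
    have hmem : Ioo (-ε) ε ∈ nhds (0:ℝ) := isOpen_Ioo.mem_nhds h0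
    have hωd : DifferentiableAt ℝ ω 0 :=
      ((hωs.differentiableOn one_ne_zero) 0 h0).differentiableAt hmem
    have hαd : DifferentiableAt ℝ α 0 :=
      ((hαs.differentiableOn one_ne_zero) 0 h0).differentiableAt hmem
    have hω' : HasDerivAt ω (deriv ω 0) 0 := hωd.hasDerivAt
    have hα' : HasDerivAt α (deriv α 0) 0 := hαd.hasDerivAt
    have hcomp : ∀ (u : ℝ → Fin 3 → ℝ), HasDerivAt u (deriv u 0) 0 →
        ∀ i : Fin 3, HasDerivAt (fun t => u t i) (deriv u 0 i) 0 := by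
      intro u hu i
      have := (ContinuousLinearMap.proj (R := ℝ) (φ := fun _ : Fin 3 => ℝ)
        i).hasFDerivAt.comp_hasDerivAt 0 hu
      exact this
    have hgi : ∀ i : Fin 3, HasDerivAt (fun t => a i * ω t i * α t i)
        (a i * deriv ω 0 i * α 0 i + a i * ω 0 i * deriv α 0 i) 0 := by
      intro i
      exact ((hcomp ω hω' i).const_mul (a i)).mul (hcomp α hα' i)
    have hfc : HasDerivAt (fun t => f (α t)) (gradf (α 0) ⬝ᵥ deriv α 0) 0 := by
      have h := (hf (α 0)).hasFDerivAt.comp_hasDerivAt 0 hα'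
      rw [← hgradf]
      exact h
    have hg : HasDerivAt
        (fun t => a 0 * ω t 0 * α t 0 + a 1 * ω t 1 * α t 1 + a 2 * ω t 2 * α t 2 + f (α t))
        ((a 0 * deriv ω 0 0 * α 0 0 + a 0 * ω 0 0 * deriv α 0 0) +
         (a 1 * deriv ω 0 1 * α 0 1 + a 1 * ω 0 1 * deriv α 0 1) +
         (a 2 * deriv ω 0 2 * α 0 2 + a 2 * ω 0 2 * deriv α 0 2) +
         gradf (α 0) ⬝ᵥ deriv α 0) 0 :=
      (((hgi 0).add (hgi 1)).add (hgi 2)).add hfc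
    have hev : (fun t => a 0 * ω t 0 * α t 0 + a 1 * ω t 1 * α t 1 + a 2 * ω t 2 * α t 2
        + f (α t)) =ᶠ[nhds (0:ℝ)]
        (fun _ => a 0 * ω 0 0 * α 0 0 + a 1 * ω 0 1 * α 0 1 + a 2 * ω 0 2 * α 0 2 + f (α 0)) := by
      filter_upwards [hmem] with t ht using hG t ht
    have hzero : (a 0 * deriv ω 0 0 * α 0 0 + a 0 * ω 0 0 * deriv α 0 0) +
        (a 1 * deriv ω 0 1 * α 0 1 + a 1 * ω 0 1 * deriv α 0 1) +
        (a 2 * deriv ω 0 2 * α 0 2 + a 2 * ω 0 2 * deriv α 0 2) +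
        gradf (α 0) ⬝ᵥ deriv α 0 = 0 := by
      rw [← hg.deriv, hev.deriv_eq]
      simp
    have hda : deriv α 0 = β ⨯₃ ω₀ := by rw [hode2 0 h0, hα0, hω0]
    have hdω : ∀ i : Fin 3, a i * deriv ω 0 i =
        ((Matrix.diagonal a *ᵥ ω₀) ⨯₃ ω₀ + κ β ⨯₃ ω₀ + β ⨯₃ gradPot β) i := by
      intro i
      have h := congrFun (hode1 0 h0) i
      rw [hω0, hα0] at h
      simpa [Matrix.mulVec_diagonal] using h
    rw [hω0, hα0, hda] at hzero
    have e0 := hdω 0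
    have e1 := hdω 1
    have e2 := hdω 2
    simp only [cross_apply, Pi.add_apply, dotProduct, Fin.sum_univ_three,
      Matrix.cons_val_zero, Matrix.cons_val_one, Matrix.head_cons, Matrix.cons_val_two,
      Matrix.tail_cons, Matrix.mulVec_diagonal, Pi.sub_apply] at hzero e0 e1 e2 ⊢
    linear_combination hzero - β 0 * e0 - β 1 * e1 - β 2 * e2
  -- Step 2: extract the components of the cross product.
  have c0 := key (Pi.single 0 1)
  have c1 := key (Pi.single 1 1)
  have c2 := key (Pi.single 2 1)
  simp only [cross_apply, dotProduct, Fin.sum_univ_three, Matrix.cons_val_zero,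
    Matrix.cons_val_one, Matrix.head_cons, Matrix.cons_val_two, Matrix.tail_cons,
    Pi.sub_apply, Pi.single_apply] at c0 c1 c2
  rw [if_neg (by decide : ¬((2:Fin 3) = 0))] at c0
  rw [if_neg (by decide : ¬((2:Fin 3) = 1))] at c1
  rw [if_neg (by decide : ¬((0:Fin 3) = 2)), if_neg (by decide : ¬((1:Fin 3) = 2))] at c2
  norm_num at c0 c1 c2
  simp only [dotProduct, Fin.sum_univ_three] at hβ
  have d0 : (κ β 1 - gradf β 1) * β 2 - (κ β 2 - gradf β 2) * β 1 = 0 := by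
    linear_combination -c0
  have d1 : (κ β 2 - gradf β 2) * β 0 - (κ β 0 - gradf β 0) * β 2 = 0 := by
    linear_combination -c1
  have d2 : (κ β 0 - gradf β 0) * β 1 - (κ β 1 - gradf β 1) * β 0 = 0 := by
    linear_combination -c2
  constructor
  · funext i
    fin_cases i
    · show (κ β 1 - gradf β 1) * β 2 - (κ β 2 - gradf β 2) * β 1 = 0
      exact d0
    · show (κ β 2 - gradf β 2) * β 0 - (κ β 0 - gradf β 0) * β 2 = 0
      exact d1
    · show (κ β 0 - gradf β 0) * β 1 - (κ β 1 - gradf β 1) * β 0 = 0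
      exact d2
  · funext i
    fin_cases i
    · show κ β 0 = ((κ β - gradf β) ⬝ᵥ β) * β 0 + gradf β 0
      simp only [dotProduct, Fin.sum_univ_three, Pi.sub_apply]
      linear_combination (-(κ β 0 - gradf β 0)) * hβ + β 1 * d2 - β 2 * d1
    · show κ β 1 = ((κ β - gradf β) ⬝ᵥ β) * β 1 + gradf β 1
      simp only [dotProduct, Fin.sum_univ_three, Pi.sub_apply]
      linear_combination (-(κ β 1 - gradf β 1)) * hβ - β 0 * d2 + β 2 * d0
    · show κ β 2 = ((κ β - gradf β) ⬝ᵥ β) * β 2 + gradf β 2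
      simp only [dotProduct, Fin.sum_univ_three, Pi.sub_apply]
      linear_combination (-(κ β 2 - gradf β 2)) * hβ + β 0 * d1 - β 1 * d0
end
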